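/- Let n ≥ 1 and let V : ℝⁿ → ℝ be continuously differentiable and short range, and let λ > 0. Then there exists R₁ ≥ R₀ (depending only on C, μ, R₀, λ) with the following property: for every Hamiltonian trajectory (x, ξ) defined on an interval [t₁, T) with energy ½‖ξ(t₁)‖² + V(x(t₁)) = λ, and satisfying ‖x(t₁)‖ ≥ R₁ and ⟨x(t₁), ξ(t₁)⟩ ≥ 0, one has for all t ∈ [t₁, T): ‖x(t)‖ ≥ R₁, ⟨x(t), ξ(t)⟩ ≥ ⟨x(t₁), ξ(t₁)⟩ + λ(t − t₁), and ‖x(t)‖² ≥ ‖x(t₁)‖² + λ(t − t₁)². In particular such a trajectory is forward non-trapped: ‖x(t)‖ → ∞ as t → T if T = ∞. -/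

import Mathlib

open scoped RealInnerProductSpace
open Filter

noncomputable section

/-- Euclidean configuration space `ℝⁿ`. -/
abbrev Euc (n : ℕ) := EuclideanSpace ℝ (Fin n)

open Set in
lemma escape_core (n : ℕ) (R₁ lam : ℝ) (hlam : 0 < lam) (hR₁1 : 1 ≤ R₁)
    (V : Euc n → ℝ) (hV : ContDiff ℝ 1 V)
    (hbound : ∀ y : Euc n, R₁ - 1 ≤ ‖y‖ → 2 * |V y| + ‖y‖ * ‖gradient V y‖ ≤ lam)
    (t₁ T : ℝ) (x ξ : ℝ → Euc n)
    (hx : ∀ t ∈ Set.Ico t₁ T, HasDerivAt x (ξ t) t)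
    (hξ : ∀ t ∈ Set.Ico t₁ T, HasDerivAt ξ (-gradient V (x t)) t)
    (hE : (1 / 2) * ‖ξ t₁‖ ^ 2 + V (x t₁) = lam)
    (hx₁ : R₁ ≤ ‖x t₁‖) (hout : 0 ≤ ⟪x t₁, ξ t₁⟫) :
    ∀ t ∈ Set.Ico t₁ T,
      R₁ ≤ ‖x t‖ ∧
      ⟪x t₁, ξ t₁⟫ + lam * (t - t₁) ≤ ⟪x t, ξ t⟫ ∧
      ‖x t₁‖ ^ 2 + lam * (t - t₁) ^ 2 ≤ ‖x t‖ ^ 2 := by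
  -- derivative of V ∘ x
  have hVd : ∀ s ∈ Ico t₁ T, HasDerivAt (fun t => V (x t)) ⟪gradient V (x s), ξ s⟫ s := by
    intro s hs
    have hg := ((hV.differentiable one_ne_zero) (x s)).hasGradientAt
    have h := hg.hasFDerivAt.comp_hasDerivAt s (hx s hs)
    simpa [Function.comp_def, InnerProductSpace.toDual_apply_apply] using h
  -- energy conservation
  have hEc : ∀ t ∈ Ico t₁ T, (1 / 2) * ‖ξ t‖ ^ 2 + V (x t) = lam := by
    intro t ht
    have hcont : ContinuousOn (fun t => (1 / 2) * ‖ξ t‖ ^ 2 + V (x t)) (Icc t₁ t) := by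
      intro s hs
      have hs' : s ∈ Ico t₁ T := ⟨hs.1, lt_of_le_of_lt hs.2 ht.2⟩
      have h1 : HasDerivAt (fun t => ‖ξ t‖ ^ 2) (2 * ⟪ξ s, -gradient V (x s)⟫) s := by
        have h := (hξ s hs').inner ℝ (hξ s hs')
        simp only [real_inner_self_eq_norm_sq] at h
        have e : ⟪ξ s, -gradient V (x s)⟫ + ⟪-gradient V (x s), ξ s⟫
            = 2 * ⟪ξ s, -gradient V (x s)⟫ := by
          rw [real_inner_comm (-gradient V (x s))]; ring
        rwa [e] at h
      exact (((h1.const_mul (1/2 : ℝ)).add (hVd s hs')).continuousAt).continuousWithinAt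
    have hderiv : ∀ s ∈ Ico t₁ t,
        HasDerivWithinAt (fun t => (1 / 2) * ‖ξ t‖ ^ 2 + V (x t)) 0 (Ici s) s := by
      intro s hs
      have hs' : s ∈ Ico t₁ T := ⟨hs.1, hs.2.trans ht.2⟩
      have h1 : HasDerivAt (fun t => ‖ξ t‖ ^ 2) (2 * ⟪ξ s, -gradient V (x s)⟫) s := by
        have h := (hξ s hs').inner ℝ (hξ s hs')
        simp only [real_inner_self_eq_norm_sq] at h
        have e : ⟪ξ s, -gradient V (x s)⟫ + ⟪-gradient V (x s), ξ s⟫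
            = 2 * ⟪ξ s, -gradient V (x s)⟫ := by
          rw [real_inner_comm (-gradient V (x s))]; ring
        rwa [e] at h
      have h2 := (h1.const_mul (1/2 : ℝ)).add (hVd s hs')
      have e2 : (1/2 : ℝ) * (2 * ⟪ξ s, -gradient V (x s)⟫) + ⟪gradient V (x s), ξ s⟫ = 0 := by
        rw [inner_neg_right, real_inner_comm]; ring
      rw [e2] at h2
      exact h2.hasDerivWithinAt
    have := constant_of_has_deriv_right_zero hcont hderiv t (right_mem_Icc.2 ht.1)
    exact this.trans hE
  -- derivative of f t = ⟪x t, ξ t⟫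
  set F : ℝ → ℝ := fun s => ‖ξ s‖ ^ 2 - ⟪x s, gradient V (x s)⟫ with hF
  have hfd : ∀ s ∈ Ico t₁ T, HasDerivAt (fun t => ⟪x t, ξ t⟫) (F s) s := by
    intro s hs
    have h := (hx s hs).inner ℝ (hξ s hs)
    have e : ⟪x s, -gradient V (x s)⟫ + ⟪ξ s, ξ s⟫ = F s := by
      rw [inner_neg_right, real_inner_self_eq_norm_sq, hF]; ring
    rwa [e] at h
  -- derivative of ‖x t‖²
  have hqd : ∀ s ∈ Ico t₁ T, HasDerivAt (fun t => ‖x t‖ ^ 2) (2 * ⟪x s, ξ s⟫) s := by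
    intro s hs
    have h := (hx s hs).inner ℝ (hx s hs)
    simp only [real_inner_self_eq_norm_sq] at h
    have e : ⟪x s, ξ s⟫ + ⟪ξ s, x s⟫ = 2 * ⟪x s, ξ s⟫ := by
      rw [real_inner_comm (ξ s)]; ring
    rwa [e] at h
  -- lower bound on F where ‖x s‖ ≥ R₁ - 1
  have hFlb : ∀ s ∈ Ico t₁ T, R₁ - 1 ≤ ‖x s‖ → lam ≤ F s := by
    intro s hs hnorm
    have hb := hbound (x s) hnorm
    have hen := hEc s hs
    have hnsq : ‖ξ s‖ ^ 2 = 2 * lam - 2 * V (x s) := by linarith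
    have hip : ⟪x s, gradient V (x s)⟫ ≤ ‖x s‖ * ‖gradient V (x s)‖ := real_inner_le_norm _ _
    have habs : V (x s) ≤ |V (x s)| := le_abs_self _
    rw [hF]; dsimp only; linarith
  -- continuity helpers
  have hxc : ∀ {a : ℝ}, a < T → ContinuousOn x (Icc t₁ a) := by
    intro a ha s hs
    exact ((hx s ⟨hs.1, lt_of_le_of_lt hs.2 ha⟩).continuousAt).continuousWithinAt
  have hfc : ∀ {a : ℝ}, a < T → ContinuousOn (fun t => ⟪x t, ξ t⟫) (Icc t₁ a) := by
    intro a ha s hs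
    exact ((hfd s ⟨hs.1, lt_of_le_of_lt hs.2 ha⟩).continuousAt).continuousWithinAt
  have hqc : ∀ {a : ℝ}, a < T → ContinuousOn (fun t => ‖x t‖ ^ 2) (Icc t₁ a) := by
    intro a ha s hs
    exact ((hqd s ⟨hs.1, lt_of_le_of_lt hs.2 ha⟩).continuousAt).continuousWithinAt
  -- Claim 1: the norm never drops to R₁ - 1
  have claim1 : ∀ t ∈ Ico t₁ T, R₁ - 1 ≤ ‖x t‖ := by
    intro t ht
    by_contra hcon
    push_neg at hcon
    set B : Set ℝ := {s ∈ Icc t₁ t | ‖x s‖ ≤ R₁ - 1} with hB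
    have hBne : B.Nonempty := ⟨t, ⟨⟨ht.1, le_refl t⟩, hcon.le⟩⟩
    have hBclosed : IsClosed B := by
      have : B = Icc t₁ t ∩ (fun s => ‖x s‖) ⁻¹' Iic (R₁ - 1) := by
        ext s; simp [hB]
      rw [this]
      exact ((continuous_norm.comp_continuousOn (hxc ht.2))).preimage_isClosed_of_isClosed
        isClosed_Icc isClosed_Iic
    have hBbdd : BddBelow B := ⟨t₁, fun s hs => hs.1.1⟩
    set u := sInf B with hu
    have huB : u ∈ B := hBclosed.csInf_mem hBne hBbdd
    have hut : u ≤ t := huB.1.2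
    have hut₁ : t₁ ≤ u := huB.1.1
    have huT : u < T := lt_of_le_of_lt hut ht.2
    -- on [t₁, u), ‖x s‖ > R₁ - 1
    have hbefore : ∀ s ∈ Ico t₁ u, R₁ - 1 ≤ ‖x s‖ := by
      intro s hs
      by_contra h
      push_neg at h
      have hsB : s ∈ B := ⟨⟨hs.1, hs.2.le.trans hut⟩, h.le⟩
      exact absurd (csInf_le hBbdd hsB) (not_le.2 hs.2)
    -- f ≥ 0 on [t₁, u]
    have hf0 : ∀ s ∈ Icc t₁ u, (0 : ℝ) ≤ ⟪x s, ξ s⟫ := by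
      have hmono : MonotoneOn (fun t => ⟪x t, ξ t⟫) (Icc t₁ u) := by
        apply monotoneOn_of_hasDerivWithinAt_nonneg (convex_Icc t₁ u) (hfc huT)
          (f' := F)
        · intro s hs
          rw [interior_Icc] at hs
          exact (hfd s ⟨hs.1.le, hs.2.trans_le hut |>.trans ht.2⟩).hasDerivWithinAt
        · intro s hs
          rw [interior_Icc] at hs
          have hs' : s ∈ Ico t₁ T := ⟨hs.1.le, hs.2.trans_le hut |>.trans ht.2⟩
          exact le_trans hlam.le (hFlb s hs' (hbefore s ⟨hs.1.le, hs.2⟩))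
      intro s hs
      exact le_trans hout (hmono (left_mem_Icc.2 (hut₁)) hs hs.1)
    -- ‖x·‖² monotone on [t₁, u]
    have hqmono : MonotoneOn (fun t => ‖x t‖ ^ 2) (Icc t₁ u) := by
      apply monotoneOn_of_hasDerivWithinAt_nonneg (convex_Icc t₁ u) (hqc huT)
        (f' := fun s => 2 * ⟪x s, ξ s⟫)
      · intro s hs
        rw [interior_Icc] at hs
        exact (hqd s ⟨hs.1.le, hs.2.trans_le hut |>.trans ht.2⟩).hasDerivWithinAt
      · intro s hs
        rw [interior_Icc] at hs
        have := hf0 s ⟨hs.1.le, hs.2.le⟩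
        linarith
    have h1 : ‖x t₁‖ ^ 2 ≤ ‖x u‖ ^ 2 :=
      hqmono (left_mem_Icc.2 hut₁) (right_mem_Icc.2 hut₁) hut₁
    have h2 : ‖x u‖ ≤ R₁ - 1 := huB.2
    have hR₁0 : (0 : ℝ) ≤ R₁ - 1 := by linarith
    have h3 : ‖x u‖ ^ 2 ≤ (R₁ - 1) ^ 2 := by
      have := pow_le_pow_left₀ (norm_nonneg (x u)) h2 2
      exact this
    have h4 : R₁ ^ 2 ≤ ‖x t₁‖ ^ 2 := by
      have := pow_le_pow_left₀ (by linarith : (0:ℝ) ≤ R₁) hx₁ 2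
      exact this
    nlinarith
  -- Now the main conclusions
  intro t ht
  have htT := ht.2
  have ht₁t := ht.1
  -- second conclusion: f t ≥ f t₁ + lam (t - t₁)
  have hfineq : ∀ s ∈ Icc t₁ t, ⟪x t₁, ξ t₁⟫ + lam * (s - t₁) ≤ ⟪x s, ξ s⟫ := by
    have hmono : MonotoneOn (fun s => ⟪x s, ξ s⟫ - lam * s) (Icc t₁ t) := by
      apply monotoneOn_of_hasDerivWithinAt_nonneg (convex_Icc t₁ t)
        ((hfc htT).sub (continuousOn_const.mul continuousOn_id))
        (f' := fun s => F s - lam)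
      · intro s hs
        rw [interior_Icc] at hs
        have hs' : s ∈ Ico t₁ T := ⟨hs.1.le, hs.2.trans htT⟩
        have hd := (hfd s hs').sub ((hasDerivAt_id s).const_mul lam)
        rw [mul_one] at hd
        exact hd.hasDerivWithinAt
      · intro s hs
        rw [interior_Icc] at hs
        have hs' : s ∈ Ico t₁ T := ⟨hs.1.le, hs.2.trans htT⟩
        have := hFlb s hs' (claim1 s hs')
        linarith
    intro s hs
    have := hmono (left_mem_Icc.2 ht₁t) hs hs.1
    simp only at this
    linarith
  have hthird : ‖x t₁‖ ^ 2 + lam * (t - t₁) ^ 2 ≤ ‖x t‖ ^ 2 := by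
    have hmono : MonotoneOn
        (fun s => ‖x s‖ ^ 2 - 2 * ⟪x t₁, ξ t₁⟫ * s - lam * (s - t₁) ^ 2) (Icc t₁ t) := by
      apply monotoneOn_of_hasDerivWithinAt_nonneg (convex_Icc t₁ t)
        (f' := fun s => 2 * ⟪x s, ξ s⟫ - 2 * ⟪x t₁, ξ t₁⟫ - lam * (2 * (s - t₁)))
      · exact ((hqc htT).sub (continuousOn_const.mul continuousOn_id)).sub
          (continuousOn_const.mul ((continuousOn_id.sub continuousOn_const).pow 2))
      · intro s hs
        rw [interior_Icc] at hs
        have hs' : s ∈ Ico t₁ T := ⟨hs.1.le, hs.2.trans htT⟩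
        have h1 := (hqd s hs').sub
          ((hasDerivAt_id s).const_mul (2 * ⟪x t₁, ξ t₁⟫))
        have h2 : HasDerivAt (fun s => lam * (s - t₁) ^ 2) (lam * (2 * (s - t₁))) s := by
          have := (((hasDerivAt_id s).sub_const t₁).pow 2).const_mul lam
          simpa using this
        have h3 := h1.sub h2
        rw [mul_one] at h3
        exact h3.hasDerivWithinAt
      · intro s hs
        rw [interior_Icc] at hs
        have := hfineq s ⟨hs.1.le, hs.2.le⟩
        linarith
    have := hmono (left_mem_Icc.2 ht₁t) (right_mem_Icc.2 ht₁t) ht₁t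
    simp only at this
    nlinarith [hout, sub_nonneg.2 ht₁t]
  refine ⟨?_, by simpa using hfineq t (right_mem_Icc.2 ht₁t), hthird⟩
  have hsq : R₁ ^ 2 ≤ ‖x t‖ ^ 2 := by
    have h4 : R₁ ^ 2 ≤ ‖x t₁‖ ^ 2 := pow_le_pow_left₀ (by linarith : (0:ℝ) ≤ R₁) hx₁ 2
    nlinarith [sq_nonneg (t - t₁), hlam.le]
  have := Real.sqrt_le_sqrt hsq
  rwa [Real.sqrt_sq (by linarith : (0:ℝ) ≤ R₁), Real.sqrt_sq (norm_nonneg _)] at this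

/-- **Escape from a large ball at positive energy.**  Let `V` be `C¹` and short range
with constants `C, μ, R₀`, and let `lam > 0`.  There is `R₁ ≥ R₀`, depending only on
`C, μ, R₀, lam`, such that every Hamiltonian trajectory at energy `lam` defined on
`[t₁, T)` which starts at distance `≥ R₁` from the origin and is outgoing
(`⟨x(t₁), ξ(t₁)⟩ ≥ 0`) satisfies, for all `t ∈ [t₁, T)`:
`‖x t‖ ≥ R₁`, `⟨x t, ξ t⟩ ≥ ⟨x t₁, ξ t₁⟩ + lam (t − t₁)` and
`‖x t‖² ≥ ‖x t₁‖² + lam (t − t₁)²`; in particular, a trajectory defined on all of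
`[t₁, ∞)` is forward non-trapped: `‖x t‖ → ∞` as `t → ∞`. -/
theorem escape_at_positive_energy
    (n : ℕ) (hn : 1 ≤ n)
    (C μ R₀ lam : ℝ) (hC : 0 < C) (hμ : 0 < μ) (hR₀ : 0 < R₀) (hlam : 0 < lam) :
    ∃ R₁ : ℝ, R₀ ≤ R₁ ∧
      ∀ V : Euc n → ℝ, ContDiff ℝ 1 V →
        (∀ x : Euc n, R₀ ≤ ‖x‖ → |V x| ≤ C * (1 + ‖x‖) ^ (-μ)) →
        (∀ x : Euc n, R₀ ≤ ‖x‖ → ‖gradient V x‖ ≤ C * (1 + ‖x‖) ^ (-1 - μ)) →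
        ((∀ (t₁ T : ℝ) (x ξ : ℝ → Euc n),
            (∀ t ∈ Set.Ico t₁ T, HasDerivAt x (ξ t) t) →
            (∀ t ∈ Set.Ico t₁ T, HasDerivAt ξ (-gradient V (x t)) t) →
            (1 / 2) * ‖ξ t₁‖ ^ 2 + V (x t₁) = lam →
            R₁ ≤ ‖x t₁‖ → 0 ≤ ⟪x t₁, ξ t₁⟫ →
            ∀ t ∈ Set.Ico t₁ T,
              R₁ ≤ ‖x t‖ ∧
              ⟪x t₁, ξ t₁⟫ + lam * (t - t₁) ≤ ⟪x t, ξ t⟫ ∧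
              ‖x t₁‖ ^ 2 + lam * (t - t₁) ^ 2 ≤ ‖x t‖ ^ 2) ∧
          (∀ (t₁ : ℝ) (x ξ : ℝ → Euc n),
            (∀ t ∈ Set.Ici t₁, HasDerivAt x (ξ t) t) →
            (∀ t ∈ Set.Ici t₁, HasDerivAt ξ (-gradient V (x t)) t) →
            (1 / 2) * ‖ξ t₁‖ ^ 2 + V (x t₁) = lam →
            R₁ ≤ ‖x t₁‖ → 0 ≤ ⟪x t₁, ξ t₁⟫ →
            Tendsto (fun t => ‖x t‖) atTop atTop)) := by
  set K : ℝ := (3 * C / lam) ^ (1 / μ) with hK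
  set R₁ : ℝ := max (R₀ + 1) (max 2 (K + 1)) with hR₁def
  have hK0 : 0 ≤ K := Real.rpow_nonneg (by positivity) _
  have hR₁R₀ : R₀ + 1 ≤ R₁ := le_max_left _ _
  have hR₁2 : (2 : ℝ) ≤ R₁ := le_trans (le_max_left _ _) (le_max_right _ _)
  have hR₁K : K + 1 ≤ R₁ := le_trans (le_max_right _ _) (le_max_right _ _)
  refine ⟨R₁, by linarith, ?_⟩
  intro V hV hVbd hGbd
  have hbound : ∀ y : Euc n, R₁ - 1 ≤ ‖y‖ → 2 * |V y| + ‖y‖ * ‖gradient V y‖ ≤ lam := by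
    intro y hy
    have hy0 : R₀ ≤ ‖y‖ := by linarith
    have h1p : (0 : ℝ) < 1 + ‖y‖ := by positivity
    have hVb := hVbd y hy0
    have hGb := hGbd y hy0
    have hrne : (0 : ℝ) ≤ (1 + ‖y‖) ^ (-1 - μ) := Real.rpow_nonneg h1p.le _
    have hsplit : (1 + ‖y‖) * (1 + ‖y‖) ^ (-1 - μ) = (1 + ‖y‖) ^ (-μ) := by
      have e : (-μ) = 1 + (-1 - μ) := by ring
      rw [e, Real.rpow_add h1p, Real.rpow_one]
    have hgy : ‖y‖ * ‖gradient V y‖ ≤ C * (1 + ‖y‖) ^ (-μ) := by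
      calc ‖y‖ * ‖gradient V y‖ ≤ ‖y‖ * (C * (1 + ‖y‖) ^ (-1 - μ)) :=
            mul_le_mul_of_nonneg_left hGb (norm_nonneg _)
        _ ≤ (1 + ‖y‖) * (C * (1 + ‖y‖) ^ (-1 - μ)) :=
            mul_le_mul_of_nonneg_right (by linarith) (by positivity)
        _ = C * ((1 + ‖y‖) * (1 + ‖y‖) ^ (-1 - μ)) := by ring
        _ = C * (1 + ‖y‖) ^ (-μ) := by rw [hsplit]
    have hKle : K ≤ 1 + ‖y‖ := by linarith
    have h2 : 3 * C / lam ≤ (1 + ‖y‖) ^ μ := by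
      have := Real.rpow_le_rpow hK0 hKle hμ.le
      rwa [hK, one_div, Real.rpow_inv_rpow (by positivity) hμ.ne'] at this
    have hpos : (0 : ℝ) < (1 + ‖y‖) ^ μ := Real.rpow_pos_of_pos h1p μ
    have h3 : (0 : ℝ) < 3 * C / lam := by positivity
    have key : (1 + ‖y‖) ^ (-μ) ≤ lam / (3 * C) := by
      rw [Real.rpow_neg h1p.le]
      calc ((1 + ‖y‖) ^ μ)⁻¹ ≤ (3 * C / lam)⁻¹ := by
            exact inv_anti₀ h3 h2
        _ = lam / (3 * C) := by rw [inv_div]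
    have habs : (0:ℝ) ≤ |V y| := abs_nonneg _
    have hfin : 3 * C * ((1 + ‖y‖) ^ (-μ)) ≤ lam := by
      have := mul_le_mul_of_nonneg_left key (by positivity : (0:ℝ) ≤ 3 * C)
      calc 3 * C * ((1 + ‖y‖) ^ (-μ)) ≤ 3 * C * (lam / (3 * C)) := this
        _ = lam := by field_simp
    linarith
  have hR₁1 : (1 : ℝ) ≤ R₁ := by linarith
  constructor
  · intro t₁ T x ξ hx hξ hE hx₁ hout
    exact escape_core n R₁ lam hlam hR₁1 V hV hbound t₁ T x ξ hx hξ hE hx₁ hout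
  · intro t₁ x ξ hx hξ hE hx₁ hout
    have hlow : ∀ t, t₁ ≤ t → Real.sqrt lam * (t - t₁) ≤ ‖x t‖ := by
      intro t ht
      have hcore := escape_core n R₁ lam hlam hR₁1 V hV hbound t₁ (t + 1) x ξ
        (fun s hs => hx s hs.1) (fun s hs => hξ s hs.1) hE hx₁ hout t ⟨ht, lt_add_one t⟩
      have hsq : lam * (t - t₁) ^ 2 ≤ ‖x t‖ ^ 2 := by
        have := hcore.2.2
        nlinarith [sq_nonneg ‖x t₁‖]
      have := Real.sqrt_le_sqrt hsq
      rwa [Real.sqrt_mul hlam.le, Real.sqrt_sq (sub_nonneg.2 ht),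
        Real.sqrt_sq (norm_nonneg _)] at this
    have hten : Tendsto (fun t => Real.sqrt lam * (t - t₁)) atTop atTop := by
      apply Tendsto.const_mul_atTop (Real.sqrt_pos.2 hlam)
      exact tendsto_atTop_add_const_right atTop (-t₁) tendsto_id
    apply tendsto_atTop_mono' atTop ?_ hten
    filter_upwards [eventually_ge_atTop t₁] with t ht using hlow t ht
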